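/- Let A be a positive operator on H and T₁, T₂, S₁, S₂ A-bounded operators. Then r_A(T₁S₁ + T₂S₂) ≤ ½[‖S₁T₁‖_A + ‖S₂T₂‖_A + √((‖S₁T₁‖_A − ‖S₂T₂‖_A)² + 4‖S₁T₂‖_A ‖S₂T₁‖_A)]. -/

import Mathlib

open ContinuousLinearMap

variable {H : Type*} [NormedAddCommGroup H] [InnerProductSpace ℂ H] [CompleteSpace H]

/-- The seminorm `‖x‖_A = ‖A^{1/2} x‖ = √⟨Ax, x⟩` induced by a positive operator `A`. -/
noncomputable def anorm (A : H →L[ℂ] H) (x : H) : ℝ :=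
  Real.sqrt (A.reApplyInnerSelf x)

/-- `T` is `A`-bounded: `‖Tx‖_A ≤ c ‖x‖_A` for some `c > 0`. -/
def ABounded (A T : H →L[ℂ] H) : Prop :=
  ∃ c : ℝ, 0 < c ∧ ∀ x : H, anorm A (T x) ≤ c * anorm A x

/-- The operator seminorm `‖T‖_A`: the least `c ≥ 0` with `‖Tx‖_A ≤ c ‖x‖_A` for all `x`. -/
noncomputable def aNorm (A T : H →L[ℂ] H) : ℝ :=
  sInf {c : ℝ | 0 ≤ c ∧ ∀ x : H, anorm A (T x) ≤ c * anorm A x}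

/-- The `A`-spectral radius `r_A(T) = inf_{n ≥ 1} ‖T^n‖_A^{1/n}`. -/
noncomputable def aSpecRad (A T : H →L[ℂ] H) : ℝ :=
  ⨅ n : ℕ+, aNorm A (T ^ (n : ℕ)) ^ ((n : ℝ)⁻¹)

/-- The `A`-numerical radius `ω_A(T) = sup {|⟨ATx, x⟩| : ‖x‖_A = 1}`. -/
noncomputable def aNumRad (A T : H →L[ℂ] H) : ℝ :=
  sSup {c : ℝ | ∃ x : H, anorm A x = 1 ∧ c = ‖(inner ℂ (A (T x)) x : ℂ)‖}

/-! Write `X = T₁S₁ + T₂S₂` as a row `(T₁ T₂)` times a column `(S₁, S₂)ᵀ`. Then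
`X^(n+1) = ∑ᵢⱼ Tᵢ (Nⁿ)ᵢⱼ Sⱼ` for the operator matrix `N = (Sᵢ Tⱼ)`, and if a positive vector `v`
satisfies `M v ≤ μ v` for the real matrix `M = (‖Sᵢ Tⱼ‖_A)`, then `‖(Nⁿ)ᵢⱼ‖_A ≤ μⁿ vᵢ / vⱼ`, so
`‖X^(n+1)‖_A = O(μⁿ)` and `r_A(X) ≤ μ`. For a nonnegative `2 × 2` matrix such a `v` exists for
every `μ` above its Perron root `(a + d + √((a - d)² + 4bc)) / 2`. -/

lemma anorm_eq_norm_sqrt_apply {A : H →L[ℂ] H} (hA : A.IsPositive) (x : H) :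
    anorm A x = ‖CFC.sqrt A x‖ := by
  have hsq : CFC.sqrt A * CFC.sqrt A = A :=
    CFC.sqrt_mul_sqrt_self A ((nonneg_iff_isPositive A).2 hA)
  have hsymm := (CFC.sqrt_nonneg A).isSelfAdjoint.isSymmetric
  have : A.reApplyInnerSelf x = ‖CFC.sqrt A x‖ ^ 2 := by
    conv_lhs => rw [reApplyInnerSelf, ← hsq, mul_apply_eq_comp]
    rw [← coe_coe, hsymm, coe_coe, inner_self_eq_norm_sq]
  rw [anorm, this, Real.sqrt_sq (norm_nonneg _)]

lemma anorm_add_le {A : H →L[ℂ] H} (hA : A.IsPositive) (x y : H) :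
    anorm A (x + y) ≤ anorm A x + anorm A y := by
  simpa only [anorm_eq_norm_sqrt_apply hA, map_add] using norm_add_le _ _

section ABounded

variable {A T S : H →L[ℂ] H}

lemma aNorm_nonneg (A T : H →L[ℂ] H) : 0 ≤ aNorm A T :=
  Real.sInf_nonneg fun _ hc => hc.1

lemma aNorm_le_of_forall {c : ℝ} (hc : 0 ≤ c) (h : ∀ x, anorm A (T x) ≤ c * anorm A x) :
    aNorm A T ≤ c :=
  csInf_le ⟨0, fun _ hb => hb.1⟩ ⟨hc, h⟩

lemma ABounded.anorm_apply_le (hT : ABounded A T) (x : H) :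
    anorm A (T x) ≤ aNorm A T * anorm A x := by
  obtain ⟨c, hc, hcT⟩ := hT
  have hclosed : IsClosed {c : ℝ | 0 ≤ c ∧ ∀ x, anorm A (T x) ≤ c * anorm A x} := by
    simp only [Set.ofPred_and, Set.ofPred_forall]
    exact (isClosed_le continuous_const continuous_id).inter
      (isClosed_iInter fun x => isClosed_le continuous_const (continuous_id.mul continuous_const))
  exact (hclosed.csInf_mem ⟨c, hc.le, hcT⟩ ⟨0, fun _ hb => hb.1⟩).2 x

lemma aNorm_zero (A : H →L[ℂ] H) : aNorm A 0 = 0 :=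
  (aNorm_le_of_forall le_rfl fun x => by simp [anorm, reApplyInnerSelf]).antisymm
    (aNorm_nonneg A 0)

lemma aNorm_one_le (A : H →L[ℂ] H) : aNorm A 1 ≤ 1 :=
  aNorm_le_of_forall zero_le_one fun x => by simp

lemma ABounded.zero (A : H →L[ℂ] H) : ABounded A 0 :=
  ⟨1, one_pos, fun x => by simp [anorm, reApplyInnerSelf, Real.sqrt_nonneg]⟩

lemma ABounded.one (A : H →L[ℂ] H) : ABounded A 1 :=
  ⟨1, one_pos, fun x => by simp⟩

lemma ABounded.mul (hT : ABounded A T) (hS : ABounded A S) : ABounded A (T * S) := by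
  obtain ⟨c, hc, hcT⟩ := hT
  obtain ⟨d, hd, hdS⟩ := hS
  refine ⟨c * d, mul_pos hc hd, fun x => ?_⟩
  calc anorm A (T (S x)) ≤ c * anorm A (S x) := hcT _
    _ ≤ c * (d * anorm A x) := mul_le_mul_of_nonneg_left (hdS x) hc.le
    _ = c * d * anorm A x := by ring

lemma ABounded.add (hA : A.IsPositive) (hT : ABounded A T) (hS : ABounded A S) :
    ABounded A (T + S) := by
  obtain ⟨c, hc, hcT⟩ := hT
  obtain ⟨d, hd, hdS⟩ := hS
  refine ⟨c + d, add_pos hc hd, fun x => ?_⟩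
  calc anorm A (T x + S x) ≤ anorm A (T x) + anorm A (S x) := anorm_add_le hA _ _
    _ ≤ c * anorm A x + d * anorm A x := add_le_add (hcT x) (hdS x)
    _ = (c + d) * anorm A x := by ring

lemma aNorm_mul_le (hT : ABounded A T) (hS : ABounded A S) :
    aNorm A (T * S) ≤ aNorm A T * aNorm A S := by
  refine aNorm_le_of_forall (mul_nonneg (aNorm_nonneg A T) (aNorm_nonneg A S)) fun x => ?_
  calc anorm A (T (S x)) ≤ aNorm A T * anorm A (S x) := hT.anorm_apply_le _
    _ ≤ aNorm A T * (aNorm A S * anorm A x) :=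
        mul_le_mul_of_nonneg_left (hS.anorm_apply_le x) (aNorm_nonneg A T)
    _ = aNorm A T * aNorm A S * anorm A x := by ring

lemma aNorm_add_le (hA : A.IsPositive) (hT : ABounded A T) (hS : ABounded A S) :
    aNorm A (T + S) ≤ aNorm A T + aNorm A S := by
  refine aNorm_le_of_forall (add_nonneg (aNorm_nonneg A T) (aNorm_nonneg A S)) fun x => ?_
  calc anorm A (T x + S x) ≤ anorm A (T x) + anorm A (S x) := anorm_add_le hA _ _
    _ ≤ aNorm A T * anorm A x + aNorm A S * anorm A x :=
        add_le_add (hT.anorm_apply_le x) (hS.anorm_apply_le x)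
    _ = (aNorm A T + aNorm A S) * anorm A x := by ring

variable {ι : Type*} {s : Finset ι} {f : ι → H →L[ℂ] H}

lemma ABounded.sum (hA : A.IsPositive) (hf : ∀ i ∈ s, ABounded A (f i)) :
    ABounded A (∑ i ∈ s, f i) :=
  Finset.sum_induction f (ABounded A) (fun _ _ => ABounded.add hA) (ABounded.zero A) hf

lemma aNorm_sum_le (hA : A.IsPositive) (hf : ∀ i ∈ s, ABounded A (f i)) :
    aNorm A (∑ i ∈ s, f i) ≤ ∑ i ∈ s, aNorm A (f i) :=
  Finset.le_sum_of_subadditive_on_pred (aNorm A) (ABounded A) (aNorm_zero A).le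
    (fun _ _ => aNorm_add_le hA) (fun _ _ => ABounded.add hA) f hf

end ABounded

lemma sum_mul_pow_succ {R ι : Type*} [Semiring R] [Fintype ι] [DecidableEq ι]
    (t s : ι → R) (n : ℕ) :
    (∑ i, t i * s i) ^ (n + 1) =
      ∑ i, ∑ j, t i * ((Matrix.of fun i j => s i * t j) ^ n) i j * s j := by
  induction n with
  | zero => simp [Matrix.one_apply]
  | succ n ih =>
    rw [pow_succ, ih, pow_succ]
    simp only [Matrix.mul_apply, Matrix.of_apply, Finset.sum_mul, Finset.mul_sum, mul_assoc]
    exact Finset.sum_comm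

section OperatorMatrix

variable {A : H →L[ℂ] H} {ι : Type*} [Fintype ι] [DecidableEq ι] {N : Matrix ι ι (H →L[ℂ] H)}

lemma ABounded.matrix_pow_apply (hA : A.IsPositive) (hN : ∀ i j, ABounded A (N i j)) (n : ℕ)
    (i j : ι) : ABounded A ((N ^ n) i j) := by
  induction n generalizing j with
  | zero =>
    rw [pow_zero, Matrix.one_apply]
    split_ifs
    exacts [ABounded.one A, ABounded.zero A]
  | succ n ih =>
    rw [pow_succ, Matrix.mul_apply]
    exact ABounded.sum hA fun k _ => (ih k).mul (hN k j)

lemma sum_aNorm_pow_apply_mul_le (hA : A.IsPositive) (hN : ∀ i j, ABounded A (N i j))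
    {v : ι → ℝ} (hv : ∀ i, 0 ≤ v i) {μ : ℝ} (hμ : 0 ≤ μ)
    (h : ∀ i, ∑ j, aNorm A (N i j) * v j ≤ μ * v i) (n : ℕ) (i : ι) :
    ∑ j, aNorm A ((N ^ n) i j) * v j ≤ μ ^ n * v i := by
  induction n with
  | zero =>
    calc ∑ j, aNorm A ((N ^ 0) i j) * v j ≤ ∑ j, if i = j then v j else 0 := by
          refine Finset.sum_le_sum fun j _ => ?_
          rw [pow_zero, Matrix.one_apply]
          split_ifs
          exacts [mul_le_of_le_one_left (hv j) (aNorm_one_le A), by simp [aNorm_zero]]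
      _ = 1 * v i := by simp
  | succ n ih =>
    have hNn := ABounded.matrix_pow_apply hA hN n i
    calc ∑ k, aNorm A ((N ^ (n + 1)) i k) * v k
        ≤ ∑ k, (∑ j, aNorm A ((N ^ n) i j) * aNorm A (N j k)) * v k := by
          refine Finset.sum_le_sum fun k _ => mul_le_mul_of_nonneg_right ?_ (hv k)
          rw [pow_succ, Matrix.mul_apply]
          refine (aNorm_sum_le hA fun j _ => (hNn j).mul (hN j k)).trans ?_
          exact Finset.sum_le_sum fun j _ => aNorm_mul_le (hNn j) (hN j k)
      _ = ∑ j, aNorm A ((N ^ n) i j) * ∑ k, aNorm A (N j k) * v k := by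
          simp only [Finset.sum_mul, Finset.mul_sum, mul_assoc]
          exact Finset.sum_comm
      _ ≤ ∑ j, aNorm A ((N ^ n) i j) * (μ * v j) :=
          Finset.sum_le_sum fun j _ => mul_le_mul_of_nonneg_left (h j) (aNorm_nonneg _ _)
      _ = μ * ∑ j, aNorm A ((N ^ n) i j) * v j := by
          rw [Finset.mul_sum]; congr 1; ext j; ring
      _ ≤ μ ^ (n + 1) * v i := by
          rw [pow_succ', mul_assoc]; exact mul_le_mul_of_nonneg_left ih hμ

lemma aNorm_pow_apply_le (hA : A.IsPositive) (hN : ∀ i j, ABounded A (N i j))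
    {v : ι → ℝ} (hv : ∀ i, 0 < v i) {μ : ℝ} (hμ : 0 ≤ μ)
    (h : ∀ i, ∑ j, aNorm A (N i j) * v j ≤ μ * v i) (n : ℕ) (i j : ι) :
    aNorm A ((N ^ n) i j) ≤ μ ^ n * v i / v j := by
  rw [le_div_iff₀ (hv j)]
  refine (Finset.single_le_sum (fun k _ => ?_) (Finset.mem_univ j)).trans
    (sum_aNorm_pow_apply_mul_le hA hN (fun i => (hv i).le) hμ h n i)
  exact mul_nonneg (aNorm_nonneg _ _) (hv k).le

end OperatorMatrix

open Filter Topology in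
lemma aSpecRad_le_of_aNorm_pow_le {A X : H →L[ℂ] H} {C μ : ℝ} (hC : 0 < C) (hμ : 0 ≤ μ)
    (h : ∀ n : ℕ, aNorm A (X ^ (n + 1)) ≤ C * μ ^ (n + 1)) : aSpecRad A X ≤ μ := by
  have hbdd : BddBelow (Set.range fun n : ℕ+ => aNorm A (X ^ (n : ℕ)) ^ ((n : ℝ)⁻¹)) :=
    ⟨0, by rintro _ ⟨n, rfl⟩; exact Real.rpow_nonneg (aNorm_nonneg A _) _⟩
  have hle (n : ℕ) : aSpecRad A X ≤ C ^ (((n + 1 : ℕ) : ℝ)⁻¹) * μ := calc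
    aSpecRad A X ≤ aNorm A (X ^ (n + 1)) ^ (((n + 1 : ℕ) : ℝ)⁻¹) := ciInf_le hbdd n.succPNat
    _ ≤ (C * μ ^ (n + 1)) ^ (((n + 1 : ℕ) : ℝ)⁻¹) :=
        Real.rpow_le_rpow (aNorm_nonneg A _) (h n) (by positivity)
    _ = C ^ (((n + 1 : ℕ) : ℝ)⁻¹) * μ := by
        rw [Real.mul_rpow hC.le (by positivity), Real.pow_rpow_inv_natCast hμ n.succ_ne_zero]
  have hexp : Tendsto (fun n : ℕ => (((n + 1 : ℕ) : ℝ)⁻¹)) atTop (𝓝 0) := by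
    simpa [one_div] using tendsto_one_div_add_atTop_nhds_zero_nat (𝕜 := ℝ)
  have hlim : Tendsto (fun n : ℕ => C ^ (((n + 1 : ℕ) : ℝ)⁻¹) * μ) atTop (𝓝 μ) := by
    simpa using ((Real.continuousAt_const_rpow hC.ne').tendsto.comp hexp).mul_const μ
  exact ge_of_tendsto' hlim hle

open Matrix in
theorem aSpecRad_sum_mul_le {A : H →L[ℂ] H} (hA : A.IsPositive) {ι : Type*} [Fintype ι]
    {T S : ι → H →L[ℂ] H} (hT : ∀ i, ABounded A (T i)) (hS : ∀ i, ABounded A (S i))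
    {v : ι → ℝ} (hv : ∀ i, 0 < v i) {μ : ℝ} (hμ : 0 < μ)
    (h : (Matrix.of fun i j => aNorm A (S i * T j)) *ᵥ v ≤ μ • v) :
    aSpecRad A (∑ i, T i * S i) ≤ μ := by
  classical
  set N : Matrix ι ι (H →L[ℂ] H) := Matrix.of fun i j => S i * T j
  have hN (i j : ι) : ABounded A (N i j) := (hS i).mul (hT j)
  have hNn := ABounded.matrix_pow_apply hA hN
  have hNn_le := aNorm_pow_apply_le hA hN hv hμ.le fun i => h i
  have hterm (n : ℕ) (i j : ι) :
      aNorm A (T i * (N ^ n) i j * S j) ≤ aNorm A (T i) * aNorm A (S j) * v i / v j * μ ^ n :=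
    calc aNorm A (T i * (N ^ n) i j * S j)
        ≤ aNorm A (T i) * aNorm A ((N ^ n) i j) * aNorm A (S j) :=
          (aNorm_mul_le ((hT i).mul (hNn n i j)) (hS j)).trans <| mul_le_mul_of_nonneg_right
            (aNorm_mul_le (hT i) (hNn n i j)) (aNorm_nonneg _ _)
      _ ≤ aNorm A (T i) * (μ ^ n * v i / v j) * aNorm A (S j) :=
          mul_le_mul_of_nonneg_right
            (mul_le_mul_of_nonneg_left (hNn_le n i j) (aNorm_nonneg _ _)) (aNorm_nonneg _ _)
      _ = aNorm A (T i) * aNorm A (S j) * v i / v j * μ ^ n := by ring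
  set K := ∑ i, ∑ j, aNorm A (T i) * aNorm A (S j) * v i / v j
  have hK : 0 ≤ K := Finset.sum_nonneg fun i _ => Finset.sum_nonneg fun j _ =>
    div_nonneg (mul_nonneg (mul_nonneg (aNorm_nonneg _ _) (aNorm_nonneg _ _)) (hv i).le) (hv j).le
  refine aSpecRad_le_of_aNorm_pow_le (C := K / μ + 1) (by positivity) hμ.le fun n => ?_
  have hbound : aNorm A ((∑ i, T i * S i) ^ (n + 1)) ≤ K * μ ^ n := calc
    aNorm A ((∑ i, T i * S i) ^ (n + 1)) = aNorm A (∑ i, ∑ j, T i * (N ^ n) i j * S j) := by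
        rw [sum_mul_pow_succ]
    _ ≤ ∑ i, ∑ j, aNorm A (T i * (N ^ n) i j * S j) := by
        refine (aNorm_sum_le hA fun i _ => ABounded.sum hA fun j _ => ?_).trans
          (Finset.sum_le_sum fun i _ => aNorm_sum_le hA fun j _ => ?_) <;>
        exact ((hT i).mul (hNn n i j)).mul (hS j)
    _ ≤ K * μ ^ n := by
        simp only [K, Finset.sum_mul]
        exact Finset.sum_le_sum fun i _ => Finset.sum_le_sum fun j _ => hterm n i j
  have hsplit : (K / μ + 1) * μ ^ (n + 1) = K * μ ^ n + μ ^ (n + 1) := by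
    field_simp
    ring
  linarith [pow_pos hμ (n + 1)]

open Matrix in
/-- The witness is `adj(μ - M) (1, 1)`, and `(μ - M) v = det(μ - M) (1, 1) ≥ 0`. -/
lemma exists_pos_mulVec_le_of_lt {a b c d μ : ℝ} (hb : 0 ≤ b) (hc : 0 ≤ c)
    (hμ : (a + d + √((a - d) ^ 2 + 4 * b * c)) / 2 < μ) :
    ∃ v : Fin 2 → ℝ, (∀ i, 0 < v i) ∧ !![a, b; c, d] *ᵥ v ≤ μ • v := by
  set q := √((a - d) ^ 2 + 4 * b * c)
  have hq : q ^ 2 = (a - d) ^ 2 + 4 * b * c := Real.sq_sqrt (by positivity)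
  obtain ⟨had, hda⟩ := abs_le.1 (Real.abs_le_sqrt (by nlinarith [mul_nonneg hb hc]) : |a - d| ≤ q)
  have hdet : b * c ≤ (μ - a) * (μ - d) := by nlinarith
  refine ⟨![μ - d + b, μ - a + c], ?_, ?_⟩
  · simp only [Fin.forall_fin_two, cons_val_zero, cons_val_one]
    constructor <;> linarith
  · simp only [Pi.le_def, Fin.forall_fin_two, mulVec, dotProduct, of_apply, cons_val',
      cons_val_fin_one, cons_val_zero, Fin.sum_univ_two, cons_val_one, Pi.smul_apply, smul_eq_mul]
    constructor <;> nlinarith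

theorem stmt9 (A T₁ T₂ S₁ S₂ : H →L[ℂ] H) (hA : A.IsPositive)
    (hT₁ : ABounded A T₁) (hT₂ : ABounded A T₂)
    (hS₁ : ABounded A S₁) (hS₂ : ABounded A S₂) :
    aSpecRad A (T₁ * S₁ + T₂ * S₂) ≤
      (aNorm A (S₁ * T₁) + aNorm A (S₂ * T₂) +
        Real.sqrt ((aNorm A (S₁ * T₁) - aNorm A (S₂ * T₂)) ^ 2 +
          4 * aNorm A (S₁ * T₂) * aNorm A (S₂ * T₁))) / 2 := by
  refine le_of_forall_gt_imp_ge_of_dense fun μ hμ => ?_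
  obtain ⟨v, hv, hMv⟩ :=
    exists_pos_mulVec_le_of_lt (aNorm_nonneg A (S₁ * T₂)) (aNorm_nonneg A (S₂ * T₁)) hμ
  have hμ_pos : 0 < μ := by
    have := aNorm_nonneg A (S₁ * T₁)
    have := aNorm_nonneg A (S₂ * T₂)
    exact lt_of_le_of_lt (by positivity) hμ
  have hM : (Matrix.of fun i j => aNorm A (![S₁, S₂] i * ![T₁, T₂] j)) =
      !![aNorm A (S₁ * T₁), aNorm A (S₁ * T₂); aNorm A (S₂ * T₁), aNorm A (S₂ * T₂)] := by
    ext i j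
    fin_cases i <;> fin_cases j <;> rfl
  have := aSpecRad_sum_mul_le hA (Fin.forall_fin_two.2 ⟨hT₁, hT₂⟩)
    (Fin.forall_fin_two.2 ⟨hS₁, hS₂⟩) hv hμ_pos (hM ▸ hMv)
  simpa [Fin.sum_univ_two] using this
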